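/- There exists a universal constant C > 0 such that for every n ≥ 2, every real k* ≥ 0, every β ∈ (0,1], and every pair of node-adjacent n-node graphs G, G', one has |f(G) − f(G')| ≤ C·( (k_G + k*)·(1 + β·k_G) + 1/β ), where f, k_G are defined from the parameters k* and β as in the concentrated-degree estimator. -/

import Mathlib

/-!
Write `f(G) - f(G')` as half the sum of `Δ(a,b) = val_G(a,b) - val_{G'}(a,b)` over ordered pairs
of distinct vertices. Let `T` consist of the vertex `i` at which `G` and `G'` differ and the
vertices of weight `< 1` in `G` or in `G'`; since `k_{G'} ≤ k_G + 1`, `|T| ≤ 2k_G + 2`. As `Δ`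
vanishes on pairs outside `T`, only the rows of `T` against `Tᶜ` and the pairs inside `T` count.
In each graph `H` the row of `i` is within `k* + 4k_H + 1/β` of `d̄_H`. For `b ∈ T \ {i}` the row
of `b` against `Tᶜ` is `(wt_G b - wt_{G'} b)·(deg b - d̄ ± |T|)` up to the density change:
degrees, `d̄` and `k` move by `O(1)`, so weights move by `O(β)`, and they can only differ when
`deg b` is within `k* + 3k_G + 1/β + O(1)` of `d̄`; each such row costs `O(1 + β(k* + k_G))`.
A pair inside `T` avoiding `i` costs `O(β) + |p_G - p_{G'}|`, and `(n - 1)|p_G - p_{G'}| ≤ 2`.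
-/

open MeasureTheory Finset
open scoped Classical

noncomputable section

/-- Two `n`-node graphs are node-adjacent if every edge in the symmetric
difference of their edge sets is incident to a single vertex `i`. -/
def NodeAdjacent {n : ℕ} (G G' : SimpleGraph (Fin n)) : Prop :=
  ∃ i : Fin n, ∀ u v : Fin n, ¬ (G.Adj u v ↔ G'.Adj u v) → u = i ∨ v = i

/-- `G` and `G'` are at node distance at most `c`: there is a path of length `c`
of consecutively node-adjacent graphs from `G` to `G'`. -/
def NodeDistLE {n : ℕ} (G G' : SimpleGraph (Fin n)) (c : ℕ) : Prop :=
  ∃ g : ℕ → SimpleGraph (Fin n), g 0 = G ∧ g c = G' ∧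
    ∀ j < c, NodeAdjacent (g j) (g (j + 1))

/-- `(ε,δ)`-node-differential privacy for a randomized algorithm, viewed as a map
assigning to each graph a (probability) measure on the output space `R`. -/
def NodeDP {n : ℕ} {R : Type*} [MeasurableSpace R]
    (A : SimpleGraph (Fin n) → Measure R) (ε δ : ℝ) : Prop :=
  ∀ G G' : SimpleGraph (Fin n), NodeAdjacent G G' → ∀ S : Set R, MeasurableSet S →
    ((A G) S).toReal ≤ Real.exp ε * ((A G') S).toReal + δ

/-- Number of edges of `G`. -/
def edgeCount {n : ℕ} (G : SimpleGraph (Fin n)) : ℕ := G.edgeSet.ncard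

/-- The empirical edge density `p_G = |E| / C(n,2)`. -/
def edgeDensity {n : ℕ} (G : SimpleGraph (Fin n)) : ℝ :=
  (edgeCount G : ℝ) / (n.choose 2 : ℝ)

/-- Degree of a vertex. -/
def deg {n : ℕ} (G : SimpleGraph (Fin n)) (v : Fin n) : ℕ := (G.neighborSet v).ncard

/-- Average degree `d̄_G = 2|E|/n  ( = (n-1)·p_G )`. -/
def avgDeg {n : ℕ} (G : SimpleGraph (Fin n)) : ℝ := 2 * (edgeCount G : ℝ) / n

/-- `G ∈ 𝒢_{n,k}` : every degree lies in `[d̄ - k, d̄ + k]`. -/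
def Concentrated {n : ℕ} (G : SimpleGraph (Fin n)) (k : ℝ) : Prop :=
  ∀ v : Fin n, |(deg G v : ℝ) - avgDeg G| ≤ k

/-- The number of vertices whose degree lies outside `[d̄_G - k* - 3m, d̄_G + k* + 3m]`. -/
def farCount {n : ℕ} (G : SimpleGraph (Fin n)) (kstar : ℝ) (m : ℕ) : ℕ :=
  {v : Fin n | kstar + 3 * (m : ℝ) < |(deg G v : ℝ) - avgDeg G|}.ncard

/-- `k_G` : the smallest positive integer `m` such that at most `m` vertices have
degree outside `[d̄_G - k* - 3m, d̄_G + k* + 3m]`. -/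
def kOf {n : ℕ} (G : SimpleGraph (Fin n)) (kstar : ℝ) : ℕ :=
  sInf {m : ℕ | 0 < m ∧ farCount G kstar m ≤ m}

/-- `t_v` : the distance from `deg_G(v)` to the interval `I_G`. -/
def tDist {n : ℕ} (G : SimpleGraph (Fin n)) (kstar : ℝ) (v : Fin n) : ℝ :=
  max 0 (|(deg G v : ℝ) - avgDeg G| - (kstar + 3 * (kOf G kstar : ℝ)))

/-- The weight `wt_G(v) = max(0, 1 - β t_v)`. -/
def wt {n : ℕ} (G : SimpleGraph (Fin n)) (kstar β : ℝ) (v : Fin n) : ℝ :=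
  max 0 (1 - β * tDist G kstar v)

/-- The value of the pair `{u,v}`:
`val_G({u,v}) = wt_G({u,v})·x_{uv} + (1 - wt_G({u,v}))·p_G`,
where `wt_G({u,v}) = min(wt_G(u), wt_G(v))`. -/
def valPair {n : ℕ} (G : SimpleGraph (Fin n)) (kstar β : ℝ) (u v : Fin n) : ℝ :=
  min (wt G kstar β u) (wt G kstar β v) * (if G.Adj u v then 1 else 0)
    + (1 - min (wt G kstar β u) (wt G kstar β v)) * edgeDensity G

/-- `f(G)` : the sum of `val_G({u,v})` over unordered pairs of distinct vertices. -/
def fEst {n : ℕ} (G : SimpleGraph (Fin n)) (kstar β : ℝ) : ℝ :=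
  (∑ u : Fin n, ∑ v : Fin n, if u ≠ v then valPair G kstar β u v else 0) / 2

/-- `f_u(G) = Σ_{v ≠ u} val_G({u,v})`. -/
def fVert {n : ℕ} (G : SimpleGraph (Fin n)) (kstar β : ℝ) (u : Fin n) : ℝ :=
  ∑ v ∈ Finset.univ.erase u, valPair G kstar β u v

/-- The smooth upper bound
`S(G) = sup_{ℓ ≥ 0} e^{-βℓ} · C·((k_G+ℓ+k*)(1+β(k_G+ℓ)) + 1/β)`. -/
def smoothS {n : ℕ} (G : SimpleGraph (Fin n)) (kstar β C : ℝ) : ℝ :=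
  ⨆ ℓ : {x : ℝ // 0 ≤ x},
    Real.exp (-β * (ℓ : ℝ)) *
      (C * (((kOf G kstar : ℝ) + (ℓ : ℝ) + kstar) * (1 + β * ((kOf G kstar : ℝ) + (ℓ : ℝ))) + 1 / β))

/-- The Student's t-distribution with 3 degrees of freedom, as a measure on `ℝ`. -/
def studentT3 : Measure ℝ :=
  MeasureTheory.volume.withDensity
    (fun z => ENNReal.ofReal (2 / (Real.sqrt 3 * Real.pi * (1 + z ^ 2 / 3) ^ 2)))

/-- The disjoint union of cliques on `Fin n` given by a block-assignment `π`. -/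
def cliqueUnion {n i : ℕ} (π : Fin n → Fin i) : SimpleGraph (Fin n) where
  Adj u v := u ≠ v ∧ π u = π v
  symm := ⟨fun u v h => ⟨Ne.symm h.1, h.2.symm⟩⟩
  loopless := ⟨fun u h => h.1 rfl⟩

lemma Finset.sum_sum_erase_eq_of_symm {α M : Type*} [Fintype α] [DecidableEq α]
    [AddCommMonoid M] (f : α → α → M) (hf : ∀ a b, f a b = f b a) (T : Finset α)
    (hT : ∀ a ∉ T, ∀ b ∉ T, f a b = 0) :
    ∑ a, ∑ b ∈ univ.erase a, f a b
      = ∑ a ∈ T, ∑ b ∈ T.erase a, f a b + 2 • ∑ a ∈ T, ∑ b ∈ Tᶜ, f a b := by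
  have hrow : ∀ a, ∑ b ∈ univ.erase a, f a b
      = ∑ b ∈ T.erase a, f a b + ∑ b ∈ Tᶜ.erase a, f a b := by
    intro a
    rw [← sum_union (disjoint_compl_right.mono (erase_subset _ _) (erase_subset _ _)),
      ← erase_union_distrib, union_compl]
  have hout : ∀ a ∈ Tᶜ, ∑ b ∈ univ.erase a, f a b = ∑ b ∈ T, f a b := by
    intro a ha
    rw [mem_compl] at ha
    rw [hrow, erase_eq_of_notMem ha,
      sum_eq_zero fun b hb => hT a ha b (mem_compl.mp (mem_of_mem_erase hb)), add_zero]
  have hin : ∀ a ∈ T, ∑ b ∈ univ.erase a, f a b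
      = ∑ b ∈ T.erase a, f a b + ∑ b ∈ Tᶜ, f a b := by
    intro a ha
    rw [hrow, erase_eq_of_notMem (notMem_compl.mpr ha)]
  rw [← sum_add_sum_compl T, sum_congr rfl hin, sum_congr rfl hout, sum_add_distrib, sum_comm,
    two_nsmul, add_assoc]
  congr 2
  exact sum_congr rfl fun a _ => sum_congr rfl fun b _ => hf a b

lemma Finset.sum_compl_eq_sum_erase_sub {α M : Type*} [Fintype α] [DecidableEq α]
    [AddCommGroup M] {T : Finset α} {b : α} (hb : b ∈ T) (f : α → M) :
    ∑ a ∈ Tᶜ, f a = ∑ a ∈ univ.erase b, f a - ∑ a ∈ T.erase b, f a := by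
  rw [sum_erase_eq_sub (mem_univ b), sum_erase_eq_sub hb, ← sum_add_sum_compl T f]
  abel

section SingleGraph

variable {n : ℕ} (G : SimpleGraph (Fin n)) (kstar β : ℝ)

lemma deg_eq_degree (v : Fin n) : deg G v = G.degree v := by
  rw [deg, Set.ncard_eq_toFinset_card', Set.toFinset_card, SimpleGraph.card_neighborSet_eq_degree]

lemma edgeCount_le_choose_two : edgeCount G ≤ n.choose 2 := by
  rw [edgeCount, ← SimpleGraph.coe_edgeFinset, Set.ncard_coe_finset]
  simpa using SimpleGraph.card_edgeFinset_le_card_choose_two (G := G)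

lemma edgeDensity_nonneg : 0 ≤ edgeDensity G := by
  unfold edgeDensity; positivity

lemma edgeDensity_le_one : edgeDensity G ≤ 1 :=
  div_le_one_of_le₀ (by exact_mod_cast edgeCount_le_choose_two G) (Nat.cast_nonneg _)

lemma avgDeg_eq_sum_deg_div :
    avgDeg G = (∑ v, (deg G v : ℝ)) / n := by
  rw [avgDeg, edgeCount, ← SimpleGraph.coe_edgeFinset, Set.ncard_coe_finset]
  simp_rw [deg_eq_degree]
  exact_mod_cast congrArg (fun m : ℕ => (m : ℝ) / n) G.sum_degrees_eq_twice_card_edges.symm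

lemma edgeDensity_mul_sub_one (hn : 2 ≤ n) : edgeDensity G * ((n : ℝ) - 1) = avgDeg G := by
  have hn' : (2 : ℝ) ≤ n := by exact_mod_cast hn
  rw [edgeDensity, avgDeg, Nat.cast_choose_two]
  field_simp [show (n : ℝ) - 1 ≠ 0 by linarith]

lemma abs_adj_sub_edgeDensity_le_one (u v : Fin n) :
    |(if G.Adj u v then (1 : ℝ) else 0) - edgeDensity G| ≤ 1 := by
  have := edgeDensity_nonneg G
  have := edgeDensity_le_one G
  rw [abs_le]; constructor <;> split_ifs <;> linarith

lemma sum_erase_edgeDensity (hn : 2 ≤ n) (v : Fin n) :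
    ∑ _u ∈ univ.erase v, edgeDensity G = avgDeg G := by
  rw [sum_const, card_erase_of_mem (mem_univ v), card_univ, Fintype.card_fin, nsmul_eq_mul,
    Nat.cast_sub (by omega), Nat.cast_one, mul_comm, edgeDensity_mul_sub_one G hn]

lemma sum_adj_sub_edgeDensity (hn : 2 ≤ n) (v : Fin n) :
    ∑ u ∈ univ.erase v, ((if G.Adj v u then (1 : ℝ) else 0) - edgeDensity G)
      = deg G v - avgDeg G := by
  rw [sum_sub_distrib, sum_erase _ (by simp), sum_boole, sum_erase_edgeDensity G hn,
    deg_eq_degree, SimpleGraph.degree, SimpleGraph.neighborFinset_eq_filter]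

lemma farCount_eq_card_filter (m : ℕ) :
    farCount G kstar m = #{v | kstar + 3 * (m : ℝ) < |(deg G v : ℝ) - avgDeg G|} := by
  rw [farCount, Set.ncard_eq_toFinset_card', Set.toFinset_ofPred]

lemma kOf_mem : 0 < kOf G kstar ∧ farCount G kstar (kOf G kstar) ≤ kOf G kstar := by
  refine Nat.sInf_mem (s := {m | 0 < m ∧ farCount G kstar m ≤ m}) ⟨n + 1, n.succ_pos, ?_⟩
  rw [farCount_eq_card_filter]
  exact (card_filter_le _ _).trans (by simp)

lemma tDist_nonneg (v : Fin n) : 0 ≤ tDist G kstar v := le_max_left _ _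

lemma wt_nonneg (v : Fin n) : 0 ≤ wt G kstar β v := le_max_left _ _

lemma wt_le_one (hβ : 0 ≤ β) (v : Fin n) : wt G kstar β v ≤ 1 :=
  max_le zero_le_one (by nlinarith [tDist_nonneg G kstar v])

lemma abs_deg_sub_avgDeg_le (v : Fin n) :
    |(deg G v : ℝ) - avgDeg G| ≤ kstar + 3 * kOf G kstar + tDist G kstar v := by
  have := le_max_right 0 (|(deg G v : ℝ) - avgDeg G| - (kstar + 3 * kOf G kstar))
  rw [tDist]; linarith

lemma card_wt_lt_one_le : #{v | wt G kstar β v < 1} ≤ kOf G kstar := by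
  refine le_trans (card_le_card fun v hv => ?_) ((farCount_eq_card_filter G kstar _).symm.trans_le
    (kOf_mem G kstar).2)
  simp only [mem_filter, mem_univ, true_and] at hv ⊢
  by_contra! hle
  have : tDist G kstar v = 0 := max_eq_left (by linarith)
  simp [wt, this] at hv

lemma wt_eq_zero_of_inv_le_tDist (hβ : 0 < β) {v : Fin n} (hv : 1 / β ≤ tDist G kstar v) :
    wt G kstar β v = 0 := by
  have : 1 ≤ β * tDist G kstar v := by rwa [div_le_iff₀' hβ] at hv
  exact max_eq_left (by linarith)

lemma abs_wt_mul_deg_sub_avgDeg_le (hks : 0 ≤ kstar) (hβ : 0 < β) (v : Fin n) :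
    |wt G kstar β v * ((deg G v : ℝ) - avgDeg G)| ≤ kstar + 3 * kOf G kstar + 1 / β := by
  have hk : (0 : ℝ) ≤ kOf G kstar := Nat.cast_nonneg _
  rcases le_or_gt (1 / β) (tDist G kstar v) with hfar | hnear
  · rw [wt_eq_zero_of_inv_le_tDist G kstar β hβ hfar, zero_mul, abs_zero]
    positivity
  · rw [abs_mul, abs_of_nonneg (wt_nonneg G kstar β v)]
    have := abs_deg_sub_avgDeg_le G kstar v
    calc _ ≤ 1 * |(deg G v : ℝ) - avgDeg G| := by
          gcongr; exact wt_le_one G kstar β hβ.le v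
      _ ≤ _ := by linarith

lemma valPair_sub_edgeDensity (u v : Fin n) :
    valPair G kstar β u v - edgeDensity G
      = min (wt G kstar β u) (wt G kstar β v)
        * ((if G.Adj u v then 1 else 0) - edgeDensity G) := by
  rw [valPair]; ring

lemma valPair_comm (u v : Fin n) : valPair G kstar β u v = valPair G kstar β v u := by
  rw [valPair, valPair, min_comm, SimpleGraph.adj_comm]

lemma valPair_mem_Icc (hβ : 0 ≤ β) (u v : Fin n) : valPair G kstar β u v ∈ Set.Icc 0 1 := by
  have := edgeDensity_nonneg G
  have := edgeDensity_le_one G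
  have := le_min (wt_nonneg G kstar β u) (wt_nonneg G kstar β v)
  have := (min_le_left _ (wt G kstar β v)).trans (wt_le_one G kstar β hβ u)
  rw [valPair]
  constructor <;> split_ifs <;> nlinarith

lemma fEst_eq_sum_fVert : fEst G kstar β = (∑ u, fVert G kstar β u) / 2 := by
  simp only [fEst, fVert, ← sum_filter, filter_ne]

lemma abs_fVert_sub_avgDeg_le (hn : 2 ≤ n) (hks : 0 ≤ kstar) (hβ : 0 < β) (v : Fin n) :
    |fVert G kstar β v - avgDeg G| ≤ kstar + 4 * kOf G kstar + 1 / β := by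
  set w := wt G kstar β
  set x : Fin n → ℝ := fun u => if G.Adj v u then 1 else 0
  -- only the `≤ k_G` vertices `u` with `w u < 1` make `min (w v) (w u)` differ from `w v`
  have hterm : ∀ u, |(min (w v) (w u) - w v) * (x u - edgeDensity G)|
      ≤ if w u < 1 then 1 else 0 := by
    intro u
    rw [abs_mul]
    split_ifs with hu
    · have := abs_adj_sub_edgeDensity_le_one G v u
      have : |min (w v) (w u) - w v| ≤ 1 := by
        have := le_min (wt_nonneg G kstar β v) (wt_nonneg G kstar β u)
        have := wt_le_one G kstar β hβ.le v
        rw [abs_le]; constructor <;> linarith [min_le_left (w v) (w u)]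
      nlinarith [abs_nonneg (x u - edgeDensity G), abs_nonneg (min (w v) (w u) - w v)]
    · rw [min_eq_left ((wt_le_one G kstar β hβ.le v).trans (not_lt.mp hu)), sub_self, abs_zero,
        zero_mul]
  have herr : |fVert G kstar β v - avgDeg G - w v * ((deg G v : ℝ) - avgDeg G)|
      ≤ kOf G kstar := by
    have hsplit : fVert G kstar β v - avgDeg G - w v * ((deg G v : ℝ) - avgDeg G)
        = ∑ u ∈ univ.erase v, (min (w v) (w u) - w v) * (x u - edgeDensity G) := by
      rw [← sum_adj_sub_edgeDensity G hn, mul_sum, fVert, ← sum_erase_edgeDensity G hn v,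
        ← sum_sub_distrib, ← sum_sub_distrib]
      refine sum_congr rfl fun u _ => ?_
      rw [valPair_sub_edgeDensity]; ring
    rw [hsplit]
    calc _ ≤ ∑ u ∈ univ.erase v, (if w u < 1 then (1 : ℝ) else 0) :=
          (abs_sum_le_sum_abs _ _).trans (sum_le_sum fun u _ => hterm u)
      _ ≤ ∑ u, (if w u < 1 then (1 : ℝ) else 0) :=
          sum_le_sum_of_subset_of_nonneg (erase_subset _ _) fun _ _ _ => by positivity
      _ ≤ _ := by rw [sum_boole]; exact_mod_cast card_wt_lt_one_le G kstar β
  have := abs_wt_mul_deg_sub_avgDeg_le G kstar β hks hβ v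
  linarith [abs_sub_abs_le_abs_sub (fVert G kstar β v - avgDeg G)
    (w v * ((deg G v : ℝ) - avgDeg G))]

end SingleGraph

lemma abs_valPair_sub_valPair_le_one {n : ℕ} (G G' : SimpleGraph (Fin n)) (kstar : ℝ) {β : ℝ}
    (hβ : 0 ≤ β) (a b : Fin n) : |valPair G kstar β a b - valPair G' kstar β a b| ≤ 1 := by
  have h := valPair_mem_Icc G kstar β hβ a b
  have h' := valPair_mem_Icc G' kstar β hβ a b
  rw [abs_le]; constructor <;> linarith [h.1, h.2, h'.1, h'.2]

lemma abs_fEst_sub_fEst_le_of_valPair_eq {n : ℕ} (G G' : SimpleGraph (Fin n)) (kstar β : ℝ)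
    (T : Finset (Fin n)) (hT : ∀ a ∉ T, ∀ b ∉ T, valPair G kstar β a b = valPair G' kstar β a b) :
    |fEst G kstar β - fEst G' kstar β|
      ≤ |∑ a ∈ T, ∑ b ∈ T.erase a, (valPair G kstar β a b - valPair G' kstar β a b)| / 2
        + ∑ a ∈ T, |∑ b ∈ Tᶜ, (valPair G kstar β a b - valPair G' kstar β a b)| := by
  have hsum := sum_sum_erase_eq_of_symm
    (fun a b => valPair G kstar β a b - valPair G' kstar β a b)
    (fun a b => by rw [valPair_comm G, valPair_comm G']) T
    (fun a ha b hb => sub_eq_zero.mpr (hT a ha b hb))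
  simp only [fEst_eq_sum_fVert, fVert, ← sub_div, ← sum_sub_distrib] at hsum ⊢
  rw [hsum, abs_div, abs_two, two_nsmul]
  have hQ := abs_sum_le_sum_abs
    (fun a => ∑ b ∈ Tᶜ, (valPair G kstar β a b - valPair G' kstar β a b)) T
  generalize ∑ a ∈ T, ∑ b ∈ Tᶜ, (valPair G kstar β a b - valPair G' kstar β a b) = Q at *
  generalize ∑ a ∈ T, ∑ b ∈ T.erase a, (valPair G kstar β a b - valPair G' kstar β a b) = D
  linarith [abs_add_le D (Q + Q), abs_add_le Q Q]

def AgreeOffVertex {n : ℕ} (G G' : SimpleGraph (Fin n)) (i : Fin n) : Prop :=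
  ∀ ⦃u v : Fin n⦄, u ≠ i → v ≠ i → (G.Adj u v ↔ G'.Adj u v)

lemma NodeAdjacent.exists_agreeOffVertex {n : ℕ} {G G' : SimpleGraph (Fin n)}
    (h : NodeAdjacent G G') : ∃ i, AgreeOffVertex G G' i := by
  obtain ⟨i, hi⟩ := h
  exact ⟨i, fun u v hu hv => by_contra fun huv => (hi u v huv).elim hu hv⟩

namespace AgreeOffVertex

variable {n : ℕ} {G G' : SimpleGraph (Fin n)} {i : Fin n} {kstar β : ℝ}

lemma symm (h : AgreeOffVertex G G' i) : AgreeOffVertex G' G i :=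
  fun _ _ hu hv => (h hu hv).symm

lemma deg_le_deg_add_one (h : AgreeOffVertex G G' i) {v : Fin n} (hv : v ≠ i) :
    deg G v ≤ deg G' v + 1 := by
  rw [deg_eq_degree, deg_eq_degree, SimpleGraph.degree, SimpleGraph.degree]
  refine (card_le_card fun u hu => ?_).trans (card_insert_le i _)
  rw [SimpleGraph.mem_neighborFinset] at hu
  rcases eq_or_ne u i with rfl | hui
  · exact mem_insert_self _ _
  · exact mem_insert_of_mem ((SimpleGraph.mem_neighborFinset _ _ _).mpr ((h hv hui).mp hu))

lemma abs_deg_sub_deg_le_one (h : AgreeOffVertex G G' i) {v : Fin n} (hv : v ≠ i) :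
    |(deg G v : ℝ) - deg G' v| ≤ 1 := by
  have h₁ : (deg G v : ℝ) ≤ deg G' v + 1 := by exact_mod_cast h.deg_le_deg_add_one hv
  have h₂ : (deg G' v : ℝ) ≤ deg G v + 1 := by exact_mod_cast h.symm.deg_le_deg_add_one hv
  rw [abs_le]; constructor <;> linarith

lemma abs_avgDeg_sub_le_two (h : AgreeOffVertex G G' i) : |avgDeg G - avgDeg G'| ≤ 2 := by
  have hn : (0 : ℝ) < n := by exact_mod_cast i.pos
  have hdeg : ∀ (H : SimpleGraph (Fin n)) v, (deg H v : ℝ) ≤ n := fun H v => by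
    rw [deg_eq_degree]; exact_mod_cast (H.degree_lt_card_verts v).le.trans (by simp)
  -- only the degree of `i` moves by more than one
  have hsum : ∑ v, |(deg G v : ℝ) - deg G' v| ≤ n + (n - 1) := by
    rw [← add_sum_erase _ _ (mem_univ i)]
    gcongr
    · rw [abs_le]; constructor <;> linarith [hdeg G i, hdeg G' i, (deg G i).cast_nonneg (α := ℝ),
        (deg G' i).cast_nonneg (α := ℝ)]
    · refine (sum_le_card_nsmul _ _ 1 fun v hv =>
        h.abs_deg_sub_deg_le_one (ne_of_mem_erase hv)).trans ?_
      rw [card_erase_of_mem (mem_univ i), card_univ, Fintype.card_fin, nsmul_eq_mul, mul_one,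
        Nat.cast_sub (by exact_mod_cast i.pos), Nat.cast_one]
  rw [avgDeg_eq_sum_deg_div, avgDeg_eq_sum_deg_div, ← sub_div, ← sum_sub_distrib, abs_div,
    abs_of_pos hn, div_le_iff₀ hn]
  linarith [abs_sum_le_sum_abs (fun v => (deg G v : ℝ) - deg G' v) univ]

lemma abs_edgeDensity_sub_mul_le_two (h : AgreeOffVertex G G' i) (hn : 2 ≤ n) :
    |edgeDensity G - edgeDensity G'| * ((n : ℝ) - 1) ≤ 2 := by
  have hn' : (0 : ℝ) ≤ (n : ℝ) - 1 := by
    have : (2 : ℝ) ≤ n := by exact_mod_cast hn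
    linarith
  rw [← abs_of_nonneg hn', ← abs_mul, sub_mul, edgeDensity_mul_sub_one G hn,
    edgeDensity_mul_sub_one G' hn]
  exact h.abs_avgDeg_sub_le_two

lemma abs_abs_deg_sub_avgDeg_sub_le_three (h : AgreeOffVertex G G' i) {v : Fin n} (hv : v ≠ i) :
    |(|(deg G v : ℝ) - avgDeg G| - |(deg G' v : ℝ) - avgDeg G'|)| ≤ 3 := by
  refine (abs_abs_sub_abs_le_abs_sub _ _).trans ?_
  have := h.abs_deg_sub_deg_le_one hv
  have := h.abs_avgDeg_sub_le_two
  calc _ = |((deg G v : ℝ) - deg G' v) - (avgDeg G - avgDeg G')| := by ring_nf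
    _ ≤ _ := (abs_sub _ _).trans (by linarith)

lemma kOf_le_kOf_add_one (h : AgreeOffVertex G G' i) (kstar : ℝ) :
    kOf G' kstar ≤ kOf G kstar + 1 := by
  refine Nat.sInf_le ⟨by omega, ?_⟩
  rw [farCount_eq_card_filter]
  refine (card_le_card fun v hv => ?_).trans ((card_insert_le i _).trans
    (by rw [← farCount_eq_card_filter]; exact Nat.add_le_add_right (kOf_mem G kstar).2 1))
  simp only [mem_filter, mem_univ, true_and] at hv
  rcases eq_or_ne v i with rfl | hvi
  · exact mem_insert_self _ _
  · refine mem_insert_of_mem (mem_filter.mpr ⟨mem_univ v, ?_⟩)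
    have := abs_le.mp (h.abs_abs_deg_sub_avgDeg_sub_le_three hvi)
    push_cast at hv
    linarith

lemma abs_kOf_sub_kOf_le_one (h : AgreeOffVertex G G' i) (kstar : ℝ) :
    |(kOf G kstar : ℝ) - kOf G' kstar| ≤ 1 := by
  have h₁ : (kOf G' kstar : ℝ) ≤ kOf G kstar + 1 := by exact_mod_cast h.kOf_le_kOf_add_one kstar
  have h₂ : (kOf G kstar : ℝ) ≤ kOf G' kstar + 1 := by
    exact_mod_cast h.symm.kOf_le_kOf_add_one kstar
  rw [abs_le]; constructor <;> linarith

lemma abs_tDist_sub_le_six (h : AgreeOffVertex G G' i) (kstar : ℝ) {v : Fin n} (hv : v ≠ i) :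
    |tDist G kstar v - tDist G' kstar v| ≤ 6 := by
  rw [tDist, tDist, max_comm 0, max_comm 0]
  refine (abs_max_sub_max_le_abs _ _ _).trans ?_
  have := h.abs_abs_deg_sub_avgDeg_sub_le_three hv
  have := h.abs_kOf_sub_kOf_le_one kstar
  calc _ = |(|(deg G v : ℝ) - avgDeg G| - |(deg G' v : ℝ) - avgDeg G'|)
        - 3 * ((kOf G kstar : ℝ) - kOf G' kstar)| := by ring_nf
    _ ≤ _ := (abs_sub _ _).trans (by rw [abs_mul, abs_of_pos (three_pos (α := ℝ))]; linarith)

lemma abs_wt_sub_wt_le (h : AgreeOffVertex G G' i) (kstar : ℝ) (hβ : 0 ≤ β) {v : Fin n}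
    (hv : v ≠ i) : |wt G kstar β v - wt G' kstar β v| ≤ 6 * β := by
  rw [wt, wt, max_comm 0, max_comm 0]
  refine (abs_max_sub_max_le_abs _ _ _).trans ?_
  rw [show 1 - β * tDist G kstar v - (1 - β * tDist G' kstar v)
      = β * (tDist G' kstar v - tDist G kstar v) by ring, abs_mul, abs_of_nonneg hβ, abs_sub_comm]
  nlinarith [h.abs_tDist_sub_le_six kstar hv]

lemma tDist_lt_of_wt_ne (h : AgreeOffVertex G G' i) (hβ : 0 < β) {v : Fin n} (hv : v ≠ i)
    (hne : wt G kstar β v ≠ wt G' kstar β v) : tDist G kstar v < 1 / β + 6 := by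
  by_contra! hfar
  have := abs_le.mp (h.abs_tDist_sub_le_six kstar hv)
  exact hne <| (wt_eq_zero_of_inv_le_tDist G kstar β hβ (by linarith)).trans
    (wt_eq_zero_of_inv_le_tDist G' kstar β hβ (by linarith)).symm

lemma abs_wt_sub_wt_mul_le (h : AgreeOffVertex G G' i) (hks : 0 ≤ kstar) (hβ : 0 < β)
    {v : Fin n} (hv : v ≠ i) :
    |wt G kstar β v - wt G' kstar β v| * |(deg G v : ℝ) - avgDeg G|
      ≤ 6 * β * (kstar + 3 * kOf G kstar + 6) + 6 := by
  rcases eq_or_ne (wt G kstar β v) (wt G' kstar β v) with heq | hne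
  · rw [heq, sub_self, abs_zero, zero_mul]; positivity
  · have := h.tDist_lt_of_wt_ne hβ hv hne
    have := abs_deg_sub_avgDeg_le G kstar v
    calc _ ≤ 6 * β * (kstar + 3 * kOf G kstar + (1 / β + 6)) :=
          mul_le_mul (h.abs_wt_sub_wt_le kstar hβ.le hv) (by linarith) (abs_nonneg _)
            (by positivity)
      _ = _ := by field_simp; ring

lemma abs_valPair_sub_valPair_le (h : AgreeOffVertex G G' i) (hβ : 0 ≤ β) {a b : Fin n}
    (ha : a ≠ i) (hb : b ≠ i) :
    |valPair G kstar β a b - valPair G' kstar β a b|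
      ≤ 6 * β + |edgeDensity G - edgeDensity G'| := by
  set m := min (wt G kstar β a) (wt G kstar β b)
  set m' := min (wt G' kstar β a) (wt G' kstar β b)
  set x : ℝ := if G.Adj a b then 1 else 0
  have hdec : valPair G kstar β a b - valPair G' kstar β a b
      = (m - m') * (x - edgeDensity G) + (1 - m') * (edgeDensity G - edgeDensity G') := by
    simp only [valPair, x, m, m', h ha hb]; ring
  have hm : |m - m'| ≤ 6 * β := (abs_min_sub_min_le_max _ _ _ _).trans
    (max_le (h.abs_wt_sub_wt_le kstar hβ ha) (h.abs_wt_sub_wt_le kstar hβ hb))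
  have hm' : |1 - m'| ≤ 1 := by
    have := le_min (wt_nonneg G' kstar β a) (wt_nonneg G' kstar β b)
    have := (min_le_left _ (wt G' kstar β b)).trans (wt_le_one G' kstar β hβ a)
    rw [abs_le]; constructor <;> linarith
  rw [hdec]
  refine (abs_add_le _ _).trans ?_
  rw [abs_mul, abs_mul]
  exact add_le_add
    ((mul_le_of_le_one_right (abs_nonneg _) (abs_adj_sub_edgeDensity_le_one G a b)).trans hm)
    (mul_le_of_le_one_left (abs_nonneg _) hm')


lemma abs_fVert_sub_fVert_le (h : AgreeOffVertex G G' i) (hn : 2 ≤ n) (hks : 0 ≤ kstar)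
    (hβ : 0 < β) (v : Fin n) :
    |fVert G kstar β v - fVert G' kstar β v| ≤ 2 * kstar + 8 * kOf G kstar + 2 / β + 6 := by
  have := abs_fVert_sub_avgDeg_le G kstar β hn hks hβ v
  have := abs_fVert_sub_avgDeg_le G' kstar β hn hks hβ v
  have := h.abs_avgDeg_sub_le_two
  have : (kOf G' kstar : ℝ) ≤ kOf G kstar + 1 := by exact_mod_cast h.kOf_le_kOf_add_one kstar
  calc _ = |(fVert G kstar β v - avgDeg G) - (fVert G' kstar β v - avgDeg G')
        + (avgDeg G - avgDeg G')| := by ring_nf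
    _ ≤ |fVert G kstar β v - avgDeg G| + |fVert G' kstar β v - avgDeg G'|
        + |avgDeg G - avgDeg G'| := (abs_add_le _ _).trans (by gcongr; exact abs_sub _ _)
    _ ≤ _ := by rw [show 2 / β = 1 / β + 1 / β by ring]; linarith

variable {T : Finset (Fin n)}

lemma abs_sum_compl_valPair_sub_le_at_vertex (h : AgreeOffVertex G G' i) (hn : 2 ≤ n)
    (hks : 0 ≤ kstar) (hβ : 0 < β) (hi : i ∈ T) :
    |∑ a ∈ Tᶜ, (valPair G kstar β i a - valPair G' kstar β i a)|
      ≤ 2 * kstar + 8 * kOf G kstar + 2 / β + 6 + #T := by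
  rw [sum_compl_eq_sum_erase_sub hi, sum_sub_distrib, ← fVert, ← fVert]
  refine (abs_sub _ _).trans (add_le_add (h.abs_fVert_sub_fVert_le hn hks hβ i) ?_)
  refine (abs_sum_le_sum_abs _ _).trans ((sum_le_card_nsmul _ _ 1 fun a _ =>
    abs_valPair_sub_valPair_le_one G G' kstar hβ.le i a).trans ?_)
  rw [nsmul_eq_mul, mul_one]
  exact_mod_cast card_erase_le

lemma abs_sum_compl_valPair_sub_le_of_ne (h : AgreeOffVertex G G' i) (hn : 2 ≤ n)
    (hks : 0 ≤ kstar) (hβ : 0 < β) (hT : ∀ u ∉ T, u ≠ i ∧ wt G kstar β u = 1 ∧ wt G' kstar β u = 1)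
    {b : Fin n} (hb : b ∈ T) (hbi : b ≠ i) :
    |∑ a ∈ Tᶜ, (valPair G kstar β b a - valPair G' kstar β b a)|
      ≤ 6 * β * (kstar + 3 * kOf G kstar + 6 + #T) + 8 := by
  set δ := wt G kstar β b - wt G' kstar β b
  set x : Fin n → ℝ := fun a => if G.Adj b a then 1 else 0
  set dp := edgeDensity G - edgeDensity G'
  -- for `a ∉ T` the pair weight is `wt b`, so the row over `Tᶜ` only sees the weight change at `b`
  have hrow : ∀ a ∈ Tᶜ, valPair G kstar β b a - valPair G' kstar β b a
      = δ * (x a - edgeDensity G) + (1 - wt G' kstar β b) * dp := by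
    intro a ha
    obtain ⟨hai, hw, hw'⟩ := hT a (mem_compl.mp ha)
    simp only [valPair, hw, hw', min_eq_left (wt_le_one _ kstar β hβ.le b), h hbi hai, δ, x, dp]
    ring
  have hx : |∑ a ∈ Tᶜ, (x a - edgeDensity G)| ≤ |(deg G b : ℝ) - avgDeg G| + #T := by
    have : |∑ a ∈ T.erase b, (x a - edgeDensity G)| ≤ #T := by
      refine (abs_sum_le_sum_abs _ _).trans
        ((sum_le_card_nsmul _ _ 1 fun a _ => abs_adj_sub_edgeDensity_le_one G b a).trans ?_)
      rw [nsmul_eq_mul, mul_one]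
      exact_mod_cast card_erase_le
    rw [sum_compl_eq_sum_erase_sub hb, sum_adj_sub_edgeDensity G hn]
    linarith [abs_sub ((deg G b : ℝ) - avgDeg G) (∑ a ∈ T.erase b, (x a - edgeDensity G))]
  have hcompl : (#Tᶜ : ℝ) ≤ n - 1 := by
    have : #Tᶜ + 1 ≤ n := by simpa using card_lt_univ_of_notMem (notMem_compl.mpr hb)
    have : (#Tᶜ : ℝ) + 1 ≤ n := by exact_mod_cast this
    linarith
  have hdp : #Tᶜ * |1 - wt G' kstar β b| * |dp| ≤ 2 := by
    have := wt_nonneg G' kstar β b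
    have := wt_le_one G' kstar β hβ.le b
    have h1 : |1 - wt G' kstar β b| ≤ 1 := by rw [abs_le]; constructor <;> linarith
    have : (0 : ℝ) ≤ n - 1 := hcompl.trans' (Nat.cast_nonneg _)
    calc _ ≤ ((n : ℝ) - 1) * 1 * |dp| := by gcongr
      _ ≤ 2 := by rw [mul_one, mul_comm]; exact h.abs_edgeDensity_sub_mul_le_two hn
  have hδ := h.abs_wt_sub_wt_le kstar hβ.le hbi
  have hδd := h.abs_wt_sub_wt_mul_le hks hβ hbi
  rw [sum_congr rfl hrow, sum_add_distrib, ← mul_sum, sum_const, nsmul_eq_mul]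
  calc _ ≤ |δ| * |∑ a ∈ Tᶜ, (x a - edgeDensity G)| + #Tᶜ * |1 - wt G' kstar β b| * |dp| := by
        refine (abs_add_le _ _).trans_eq ?_
        rw [abs_mul, abs_mul, abs_mul, Nat.abs_cast, mul_assoc]
    _ ≤ |δ| * (|(deg G b : ℝ) - avgDeg G| + #T) + 2 := by gcongr
    _ ≤ _ := by nlinarith [abs_nonneg δ]

lemma abs_sum_sum_erase_valPair_sub_le (h : AgreeOffVertex G G' i) (hn : 2 ≤ n) (hβ : 0 ≤ β)
    (hi : i ∈ T) :
    |∑ a ∈ T, ∑ b ∈ T.erase a, (valPair G kstar β a b - valPair G' kstar β a b)|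
      ≤ #T * (6 * β * #T + 5) := by
  set dp := |edgeDensity G - edgeDensity G'|
  have hpair : ∀ a b, |valPair G kstar β a b - valPair G' kstar β a b|
      ≤ 6 * β + dp + ((if a = i then 1 else 0) + (if b = i then 1 else 0)) := by
    intro a b
    have := abs_valPair_sub_valPair_le_one G G' kstar hβ a b
    have : 0 ≤ 6 * β + dp := by positivity
    by_cases ha : a = i
    · rw [if_pos ha]; split_ifs <;> linarith
    by_cases hb : b = i
    · rw [if_neg ha, if_pos hb]; linarith
    rw [if_neg ha, if_neg hb, add_zero, add_zero]
    exact h.abs_valPair_sub_valPair_le hβ ha hb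
  -- the density moves by `O(1/n)`, so over a whole row of `T` it costs `O(1)`
  have hdp : #T * dp ≤ 3 := by
    have hTn : (#T : ℝ) ≤ n := by exact_mod_cast (card_le_univ T).trans (by simp)
    have := h.abs_edgeDensity_sub_mul_le_two hn
    have : dp ≤ 1 := by
      have := edgeDensity_nonneg G; have := edgeDensity_le_one G
      have := edgeDensity_nonneg G'; have := edgeDensity_le_one G'
      rw [abs_le]; constructor <;> linarith
    nlinarith [abs_nonneg (edgeDensity G - edgeDensity G')]
  calc _ ≤ ∑ a ∈ T, ∑ b ∈ T,
          (6 * β + dp + ((if a = i then 1 else 0) + (if b = i then 1 else 0))) :=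
        (abs_sum_le_sum_abs _ _).trans (sum_le_sum fun a _ => (abs_sum_le_sum_abs _ _).trans
          ((sum_le_sum fun b _ => hpair a b).trans (sum_le_sum_of_subset_of_nonneg
            (erase_subset _ _) fun _ _ _ => by positivity)))
    _ = #T * (#T * (6 * β + dp)) + 2 * #T := by
        simp only [sum_add_distrib, sum_const, nsmul_eq_mul, ← mul_sum, sum_ite_eq', hi, if_true]
        ring
    _ ≤ _ := by nlinarith

theorem abs_fEst_sub_fEst_le (h : AgreeOffVertex G G' i) (hn : 2 ≤ n) (hks : 0 ≤ kstar)
    (hβ : 0 < β) :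
    |fEst G kstar β - fEst G' kstar β|
      ≤ 400 * (((kOf G kstar : ℝ) + kstar) * (1 + β * kOf G kstar) + 1 / β) := by
  -- outside `T` both graphs agree and all weights are `1`, so only pairs meeting `T` contribute
  set T : Finset (Fin n) :=
    insert i (univ.filter (wt G kstar β · < 1) ∪ univ.filter (wt G' kstar β · < 1))
  have hi : i ∈ T := mem_insert_self _ _
  have hT : ∀ u ∉ T, u ≠ i ∧ wt G kstar β u = 1 ∧ wt G' kstar β u = 1 := by
    intro u hu
    simp only [T, mem_insert, mem_union, mem_filter, mem_univ, true_and, not_or, not_lt] at hu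
    exact ⟨hu.1, (wt_le_one G kstar β hβ.le u).antisymm hu.2.1,
      (wt_le_one G' kstar β hβ.le u).antisymm hu.2.2⟩
  have hvan : ∀ a ∉ T, ∀ b ∉ T, valPair G kstar β a b = valPair G' kstar β a b := by
    intro a ha b hb
    obtain ⟨hai, hwa, hwa'⟩ := hT a ha
    obtain ⟨hbi, hwb, hwb'⟩ := hT b hb
    simp only [valPair, hwa, hwa', hwb, hwb', h hai hbi, min_self, sub_self, zero_mul]
  have hcard : (#T : ℝ) ≤ 2 * kOf G kstar + 2 := by
    have : #T ≤ kOf G kstar + kOf G' kstar + 1 := (card_insert_le _ _).trans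
      (Nat.add_le_add_right ((card_union_le _ _).trans
        (add_le_add (card_wt_lt_one_le G kstar β) (card_wt_lt_one_le G' kstar β))) 1)
    have := h.kOf_le_kOf_add_one kstar
    exact_mod_cast (by omega : #T ≤ 2 * kOf G kstar + 2)
  have hD := h.abs_sum_sum_erase_valPair_sub_le hn hβ.le hi (kstar := kstar)
  have hQ : ∑ a ∈ T, |∑ b ∈ Tᶜ, (valPair G kstar β a b - valPair G' kstar β a b)|
      ≤ (2 * kstar + 8 * kOf G kstar + 2 / β + 6 + #T)
        + #T * (6 * β * (kstar + 3 * kOf G kstar + 6 + #T) + 8) := by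
    rw [← add_sum_erase _ _ hi]
    refine add_le_add (h.abs_sum_compl_valPair_sub_le_at_vertex hn hks hβ hi)
      ((sum_le_card_nsmul _ _ _ fun b hb => h.abs_sum_compl_valPair_sub_le_of_ne hn hks hβ hT
        (mem_of_mem_erase hb) (ne_of_mem_erase hb)).trans ?_)
    rw [nsmul_eq_mul]
    exact mul_le_mul_of_nonneg_right (by exact_mod_cast card_erase_le) (by positivity)
  have hk : (1 : ℝ) ≤ kOf G kstar := Nat.one_le_cast.mpr (kOf_mem G kstar).1
  have ht : (0 : ℝ) ≤ #T := Nat.cast_nonneg _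
  refine (abs_fEst_sub_fEst_le_of_valPair_eq G G' kstar β T hvan).trans ?_
  rw [show 2 / β = 2 * (1 / β) by ring] at hQ
  generalize (kOf G kstar : ℝ) = k at *
  generalize (#T : ℝ) = t at *
  have h4k : 0 ≤ 4 * k - t := by linarith
  have hβ4k := mul_nonneg hβ.le h4k
  have hβk : 0 ≤ β * k := mul_nonneg hβ.le (by linarith)
  linarith [mul_nonneg hβ4k (by linarith : 0 ≤ 4 * k + t), mul_nonneg hβ4k hks,
    mul_nonneg hβ4k (by linarith : 0 ≤ k), mul_nonneg hβk (by linarith : 0 ≤ k - 1),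
    mul_nonneg hβk hks, one_div_nonneg.mpr hβ.le]

end AgreeOffVertex

/-- the local sensitivity bound
`|f(G) - f(G')| ≤ C·((k_G + k*)(1 + β k_G) + 1/β)` for node-adjacent graphs. -/
theorem local_sensitivity_bound :
    ∃ C : ℝ, 0 < C ∧
      ∀ n : ℕ, 2 ≤ n → ∀ kstar : ℝ, 0 ≤ kstar → ∀ β : ℝ, 0 < β → β ≤ 1 →
        ∀ G G' : SimpleGraph (Fin n), NodeAdjacent G G' →
          |fEst G kstar β - fEst G' kstar β| ≤
            C * (((kOf G kstar : ℝ) + kstar) * (1 + β * (kOf G kstar : ℝ)) + 1 / β) := by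
  refine ⟨400, by norm_num, fun n hn kstar hks β hβ _ G G' hadj => ?_⟩
  obtain ⟨i, h⟩ := hadj.exists_agreeOffVertex
  exact h.abs_fEst_sub_fEst_le hn hks hβ

end
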